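/- Every word derivable from w by reductions and tail formations is a suffix of some word reducible from w: if u is derivable from w, then there exists a word w' obtained from w by reductions only such that u is a suffix of w'. Equivalently, any derivation can be rearranged so that tail formation occurs only as the last step. -/
import Mathlib

/-- The alphabet of orbit pattern tags: `L` for a leftward move, `R` for a rightward move. -/
inductive Letter : Type
  | L : Letter
  | R : Letter
deriving DecidableEq

open Letter

/-- A continuous interval map `f` admits the orbit pattern tag `w` if there is an
eventually fixed orbit `x 0, x 1, ..., x w.length` of `f` (the last point being fixed,
all earlier points different from it) whose `j`-th move is labelled by the `j`-th
letter of `w`: `L` if the orbit moves left, `R` if it moves right. -/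
def Admits (f : ℝ → ℝ) (w : List Letter) : Prop :=
  ∃ x : ℕ → ℝ,
    (∀ j < w.length, f (x j) = x (j + 1)) ∧
    f (x w.length) = x w.length ∧
    (∀ j < w.length, x j ≠ x w.length) ∧
    (∀ j : Fin w.length,
      (w.get j = L ∧ x ((j : ℕ) + 1) < x (j : ℕ)) ∨
      (w.get j = R ∧ x (j : ℕ) < x ((j : ℕ) + 1)))

/-- One step of reduction on words: replace an adjacent `LL` by `L`, an adjacent `RR`
by `R`, or delete an adjacent `LR` or `RL`. -/
inductive Red : List Letter → List Letter → Prop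
  | ll (v v' : List Letter) : Red (v ++ [L, L] ++ v') (v ++ [L] ++ v')
  | rr (v v' : List Letter) : Red (v ++ [R, R] ++ v') (v ++ [R] ++ v')
  | lr (v v' : List Letter) : Red (v ++ [L, R] ++ v') (v ++ v')
  | rl (v v' : List Letter) : Red (v ++ [R, L] ++ v') (v ++ v')

/-- One derivation step: a reduction, or tail formation (passing to a suffix). -/
inductive Step : List Letter → List Letter → Prop
  | red {w u : List Letter} : Red w u → Step w u
  | tail {w u : List Letter} : u <:+ w → Step w u

/-- `u` is obtained from `w` by finitely many reductions. -/
def Reducible : List Letter → List Letter → Prop := Relation.ReflTransGen Red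

/-- `u` is derivable from `w`: finitely many reductions and tail formations, in any order. -/
def Derivable : List Letter → List Letter → Prop := Relation.ReflTransGen Step

lemma red_suffix {b c w : List Letter} (h : Red b c) (hs : b <:+ w) :
    ∃ w', Red w w' ∧ c <:+ w' := by
  obtain ⟨p, rfl⟩ := hs
  cases h with
  | ll v v' => exact ⟨p ++ (v ++ [L] ++ v'),
      by simpa [List.append_assoc] using Red.ll (p ++ v) v', ⟨p, rfl⟩⟩
  | rr v v' => exact ⟨p ++ (v ++ [R] ++ v'),
      by simpa [List.append_assoc] using Red.rr (p ++ v) v', ⟨p, rfl⟩⟩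
  | lr v v' => exact ⟨p ++ (v ++ v'),
      by simpa [List.append_assoc] using Red.lr (p ++ v) v', ⟨p, rfl⟩⟩
  | rl v v' => exact ⟨p ++ (v ++ v'),
      by simpa [List.append_assoc] using Red.rl (p ++ v) v', ⟨p, rfl⟩⟩

/-- every derivable word is a suffix of a word reducible from the original:
tail formation can be postponed to the end. -/
theorem stmt12 (w u : List Letter) (h : Derivable w u) :
    ∃ w' : List Letter, Reducible w w' ∧ u <:+ w' := by
  induction h with
  | refl => exact ⟨w, Relation.ReflTransGen.refl, List.suffix_rfl⟩
  | tail _ hbc ih =>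
    obtain ⟨w', hw', hs⟩ := ih
    cases hbc with
    | red hr =>
      obtain ⟨w'', hred, hs'⟩ := red_suffix hr hs
      exact ⟨w'', hw'.tail hred, hs'⟩
    | tail hsuf => exact ⟨w', hw', hsuf.trans hs⟩
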